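/- For every u ∈ 𝒟 and all reals s, t ≥ 0 one has I(u) ≥ I(s·u⁺ + t·u⁻) + ((1−s^q)/q)·⟨I'(u),u⁺⟩ + ((1−t^q)/q)·⟨I'(u),u⁻⟩ + ((1−s^p)/p − (1−s^q)/q)·‖u⁺‖^p + ((1−t^p)/p − (1−t^q)/q)·‖u⁻‖^p + ∑_{n∈ℤ} a(n) ∑_{i=1}^{p/2−1} ∑_{j=1}^{i−1} 2^{i−j}·|Δu⁺(n)|^{p−(i+j)}·|Δu⁻(n)|^{i+j}·Θ(s,t,i,j), where Θ(s,t,i,j) := [2s^p·C(p/2−1,i)·C(i,j) + s^p·C(p/2−1,i−1)·C(i−1,j) + 2t^p·C(p/2−1,i−1)·C(i−1,j−1) + t^p·C(p/2−1,i−1)·C(i−1,j) − 2·s^{p−(i+j)}·t^{i+j}·C(p/2,i)·C(i,j)]/(2p) satisfies Θ(s,t,i,j) ≥ 0 for all such i, j. -/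

import Mathlib

noncomputable section

open Real Filter Set

namespace DPLap

/-- Forward difference operator. -/
def dlt (u : ℤ → ℝ) (n : ℤ) : ℝ := u (n + 1) - u n

/-- Positive part `u⁺`. -/
def pos (u : ℤ → ℝ) : ℤ → ℝ := fun n => max (u n) 0

/-- Negative part `u⁻`. -/
def neg (u : ℤ → ℝ) : ℤ → ℝ := fun n => min (u n) 0

/-- Summand of the `E`-norm. -/
def nsum (a b : ℤ → ℝ) (p : ℕ) (u : ℤ → ℝ) (n : ℤ) : ℝ :=
  a n * |dlt u n| ^ p + b n * |u n| ^ p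

/-- Membership in the space `E`. -/
def memE (a b : ℤ → ℝ) (p : ℕ) (u : ℤ → ℝ) : Prop :=
  Summable (nsum a b p u)

/-- The norm `‖u‖ = (∑ [a|Δu|^p + b|u|^p])^(1/p)`. -/
def dnorm (a b : ℤ → ℝ) (p : ℕ) (u : ℤ → ℝ) : ℝ :=
  (∑' n : ℤ, nsum a b p u n) ^ ((p : ℝ)⁻¹)

/-- Summand `c(n)|u(n)|^q ln(|u(n)|^r)` of the logarithmic term (with the
convention `0^q ln 0 = 0`, automatic from `Real.rpow` and `Real.log`). -/
def logSummand (c : ℤ → ℝ) (q r : ℝ) (u : ℤ → ℝ) (n : ℤ) : ℝ :=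
  c n * |u n| ^ q * Real.log (|u n| ^ r)

/-- Membership in `𝒟`. -/
def memD (a b c : ℤ → ℝ) (p : ℕ) (q r : ℝ) (u : ℤ → ℝ) : Prop :=
  memE a b p u ∧ Summable (logSummand c q r u)

/-- The energy functional `I`. -/
def En (a b c : ℤ → ℝ) (p : ℕ) (q r : ℝ) (u : ℤ → ℝ) : ℝ :=
  (1 / (p : ℝ)) * dnorm a b p u ^ p
    + (r / q ^ 2) * ∑' n : ℤ, c n * |u n| ^ q
    - (1 / q) * ∑' n : ℤ, logSummand c q r u n

/-- The pairing `⟨I'(u), v⟩`. -/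
def pr (a b c : ℤ → ℝ) (p : ℕ) (q r : ℝ) (u v : ℤ → ℝ) : ℝ :=
  (∑' n : ℤ, (a n * |dlt u n| ^ (p - 2) * dlt u n * dlt v n
      + b n * |u n| ^ (p - 2) * u n * v n))
    - ∑' n : ℤ, c n * |u n| ^ (q - 2) * u n * v n * Real.log (|u n| ^ r)

/-- The Nehari set `𝒩`. -/
def Nset (a b c : ℤ → ℝ) (p : ℕ) (q r : ℝ) : Set (ℤ → ℝ) :=
  {u | memD a b c p q r u ∧ u ≠ 0 ∧ pr a b c p q r u u = 0}

/-- The sign-changing Nehari set `ℳ`. -/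
def Mset (a b c : ℤ → ℝ) (p : ℕ) (q r : ℝ) : Set (ℤ → ℝ) :=
  {u | memD a b c p q r u ∧ pos u ≠ 0 ∧ neg u ≠ 0 ∧
      pr a b c p q r u (pos u) = 0 ∧ pr a b c p q r u (neg u) = 0}

/-- `m* = inf_ℳ I`. -/
def mStar (a b c : ℤ → ℝ) (p : ℕ) (q r : ℝ) : ℝ :=
  sInf (En a b c p q r '' Mset a b c p q r)

/-- `c* = inf_𝒩 I`. -/
def cStar (a b c : ℤ → ℝ) (p : ℕ) (q r : ℝ) : ℝ :=
  sInf (En a b c p q r '' Nset a b c p q r)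

/-- The quantity `Θ(s, t, i, j)` from Lemma 2.2. -/
def Theta (p : ℕ) (s t : ℝ) (i j : ℕ) : ℝ :=
  (2 * s ^ p * ((p / 2 - 1).choose i : ℝ) * (i.choose j : ℝ)
    + s ^ p * ((p / 2 - 1).choose (i - 1) : ℝ) * ((i - 1).choose j : ℝ)
    + 2 * t ^ p * ((p / 2 - 1).choose (i - 1) : ℝ) * ((i - 1).choose (j - 1) : ℝ)
    + t ^ p * ((p / 2 - 1).choose (i - 1) : ℝ) * ((i - 1).choose j : ℝ)
    - 2 * s ^ (p - (i + j)) * t ^ (i + j) * ((p / 2).choose i : ℝ) * (i.choose j : ℝ))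
    / (2 * (p : ℝ))

/-!
Everything reduces to an inequality for each `n`, which is then summed; the series converge because
`b ≥ b0 > 0` forces `u n → 0`, so every summand is eventually dominated by a multiple of
`nsum a b p u n`.

At a site only one of `u⁺ n`, `u⁻ n` is nonzero, and the logarithmic terms reduce to
`1 - Y + Y log Y ≥ 0` for `Y = σ ^ q`. For the differences, `A = Δu⁺ n` and `B = Δu⁻ n` have the
same sign. Write `(|A| + |B|) ^ p = (|A|^2 + (2|A||B| + |B|^2)) ^ (p/2)` and expand twice by the
binomial theorem. Then
`s^p p (α+β)^(p-1) α + t^p p (α+β)^(p-1) β - p (s α + t β)^p`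
becomes a sum of these trinomial terms, each multiplied by a weighted AM-GM gap
`(p-k) s^p + k t^p - p s^(p-k) t^k ≥ 0`. This sum has nonnegative terms, and its interior terms
are `p² 2^(i-j) |A|^(p-i-j) |B|^(i+j) Θ(s,t,i,j)`. That proves `Θ ≥ 0` and bounds the extra
double sum. Finally, since `τ ↦ (1 - σ^τ)/τ` is decreasing, the coefficients of `‖u±‖^p` are
nonnegative.
-/

lemma mul_pow_sub_mul_pow_le {s t : ℝ} (hs : 0 ≤ s) (ht : 0 ≤ t) {p k : ℕ} (hk : k ≤ p) :
    (p : ℝ) * (s ^ (p - k) * t ^ k) ≤ ((p - k : ℕ) : ℝ) * s ^ p + k * t ^ p := by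
  rcases Nat.eq_zero_or_pos p with rfl | hp
  · simp
  have hp' : (0 : ℝ) < p := by exact_mod_cast hp
  have hw : ((p - k : ℕ) : ℝ) / p + (k : ℝ) / p = 1 := by
    rw [← add_div, div_eq_one_iff_eq hp'.ne', ← Nat.cast_add, Nat.sub_add_cancel hk]
  have hpow : ∀ {x : ℝ}, 0 ≤ x → ∀ l : ℕ, (x ^ p) ^ ((l : ℝ) / p) = x ^ l := fun {x} hx l => by
    rw [← Real.rpow_natCast x p, ← Real.rpow_mul hx, mul_div_cancel₀ _ hp'.ne', Real.rpow_natCast]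
  have h := Real.geom_mean_le_arith_mean2_weighted (by positivity) (by positivity)
    (pow_nonneg hs p) (pow_nonneg ht p) hw
  rw [hpow hs, hpow ht] at h
  calc (p : ℝ) * (s ^ (p - k) * t ^ k)
      ≤ p * (((p - k : ℕ) : ℝ) / p * s ^ p + (k : ℝ) / p * t ^ p) := by gcongr
    _ = _ := by field_simp

lemma one_sub_rpow_div_le {P Q s : ℝ} (hP : 0 < P) (hPQ : P ≤ Q) (hs : 0 ≤ s) :
    (1 - s ^ Q) / Q ≤ (1 - s ^ P) / P := by
  have hQ : 0 < Q := hP.trans_le hPQ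
  -- Bernoulli's inequality for `(s ^ P) ^ (Q / P)`.
  have h := one_add_mul_self_le_rpow_one_add (s := s ^ P - 1)
    (by linarith [Real.rpow_nonneg hs P]) ((one_le_div hP).2 hPQ)
  rw [add_sub_cancel, ← Real.rpow_mul hs, mul_div_cancel₀ _ hP.ne'] at h
  rw [div_le_div_iff₀ hQ hP]
  have : Q * (s ^ P - 1) = P * (Q / P * (s ^ P - 1)) := by field_simp
  nlinarith

lemma rpow_mul_abs_log_rpow_le {x p q r : ℝ} (hx : 0 ≤ x) (hx1 : x ≤ 1) (hr : 0 ≤ r)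
    (hpq : p < q) : x ^ q * |Real.log (x ^ r)| ≤ r / (q - p) * x ^ p := by
  rcases hx.eq_or_lt with rfl | hx0
  · rcases eq_or_ne r 0 with rfl | hr0
    · simp
    · simp only [Real.zero_rpow hr0, Real.log_zero, abs_zero, mul_zero]
      exact mul_nonneg (div_nonneg hr (sub_nonneg.2 hpq.le)) (Real.rpow_nonneg le_rfl p)
  have h := Real.abs_log_mul_self_rpow_lt x (q - p) hx0 hx1 (sub_pos.2 hpq)
  calc x ^ q * |Real.log (x ^ r)| = r * x ^ p * |Real.log x * x ^ (q - p)| := by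
        have hsplit : x ^ q = x ^ p * x ^ (q - p) := by rw [← Real.rpow_add hx0, add_sub_cancel]
        rw [hsplit, Real.log_rpow hx0, abs_mul, abs_mul, abs_of_nonneg hr,
          abs_of_nonneg (Real.rpow_nonneg hx _)]
        ring
    _ ≤ r * x ^ p * (1 / (q - p)) := by gcongr
    _ = r / (q - p) * x ^ p := by ring

lemma pow_sub_two_mul_self {p : ℕ} (hp2 : 2 ≤ p) (x : ℝ) : x ^ (p - 2) * x * x = x ^ p := by
  rw [mul_assoc, ← sq, ← pow_add, Nat.sub_add_cancel hp2]

lemma rpow_sub_two_mul_self {q x : ℝ} (hq : q ≠ 0) (hx : 0 ≤ x) : x ^ (q - 2) * x * x = x ^ q := by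
  rw [mul_assoc, ← sq, ← Real.rpow_natCast, ← Real.rpow_add' hx (by norm_num; exact hq)]
  norm_num

lemma abs_mul_add_mul_le {s t A B D : ℝ} (hs : 0 ≤ s) (ht : 0 ≤ t) (hA : |A| ≤ D) (hB : |B| ≤ D) :
    |s * A + t * B| ≤ (s + t) * D := by
  calc |s * A + t * B| ≤ s * |A| + t * |B| := by
        simpa [abs_mul, abs_of_nonneg hs, abs_of_nonneg ht] using abs_add_le (s * A) (t * B)
    _ ≤ (s + t) * D := by nlinarith

def trinomialTerm (m : ℕ) (x y : ℝ) (i j : ℕ) : ℝ :=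
  m.choose i * i.choose j * 2 ^ (i - j) * x ^ (2 * m - (i + j)) * y ^ (i + j)

lemma add_pow_two_mul_eq_sum_trinomialTerm (m : ℕ) (x y : ℝ) :
    (x + y) ^ (2 * m)
      = ∑ i ∈ Finset.range (m + 1), ∑ j ∈ Finset.range (i + 1), trinomialTerm m x y i j := by
  rw [pow_mul, show (x + y) ^ 2 = (y ^ 2 + 2 * x * y) + x ^ 2 by ring, add_pow]
  refine Finset.sum_congr rfl fun i hi => ?_
  rw [add_pow, Finset.sum_mul, Finset.sum_mul]
  refine Finset.sum_congr rfl fun j hj => ?_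
  have hi : i ≤ m := Nat.lt_succ_iff.1 (Finset.mem_range.1 hi)
  have hj : j ≤ i := Nat.lt_succ_iff.1 (Finset.mem_range.1 hj)
  rw [trinomialTerm, show 2 * m - (i + j) = 2 * (m - i) + (i - j) by omega,
    show i + j = 2 * j + (i - j) by omega, pow_add, pow_add, pow_mul, pow_mul, mul_pow, mul_pow]
  ring

lemma trinomialTerm_mul_mul (m : ℕ) (s t x y : ℝ) (i j : ℕ) :
    trinomialTerm m (s * x) (t * y) i j
      = s ^ (2 * m - (i + j)) * t ^ (i + j) * trinomialTerm m x y i j := by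
  simp only [trinomialTerm, mul_pow]
  ring

/-- Differentiating `σ ↦ (σ x + y) ^ N` at `σ = 1` through a polynomial expansion in `σ`. -/
lemma sum_mul_eq_of_forall_pow_eq {ι κ : Type*} (I : Finset ι) (J : ι → Finset κ)
    (e : ι → κ → ℕ) (f : ι → κ → ℝ) {x y : ℝ} {N : ℕ}
    (h : ∀ σ : ℝ, (σ * x + y) ^ N = ∑ i ∈ I, ∑ j ∈ J i, σ ^ e i j * f i j) :
    N * (x + y) ^ (N - 1) * x = ∑ i ∈ I, ∑ j ∈ J i, (e i j : ℝ) * f i j := by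
  have hl : HasDerivAt (fun σ : ℝ => (σ * x + y) ^ N) (N * (1 * x + y) ^ (N - 1) * (1 * x)) 1 :=
    (((hasDerivAt_id (1 : ℝ)).mul_const x).add_const y).pow N
  have hr : HasDerivAt (fun σ : ℝ => ∑ i ∈ I, ∑ j ∈ J i, σ ^ e i j * f i j)
      (∑ i ∈ I, ∑ j ∈ J i, (e i j * (1 : ℝ) ^ (e i j - 1)) * f i j) 1 :=
    HasDerivAt.fun_sum fun i _ => HasDerivAt.fun_sum fun j _ => (hasDerivAt_pow _ _).mul_const _
  rw [funext h] at hl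
  simpa using hl.unique hr

lemma sum_sub_mul_trinomialTerm (m : ℕ) (x y : ℝ) :
    ∑ i ∈ Finset.range (m + 1), ∑ j ∈ Finset.range (i + 1),
        ((2 * m - (i + j) : ℕ) : ℝ) * trinomialTerm m x y i j
      = (2 * m : ℕ) * (x + y) ^ (2 * m - 1) * x := by
  refine (sum_mul_eq_of_forall_pow_eq _ _ _ _ fun σ => ?_).symm
  rw [add_pow_two_mul_eq_sum_trinomialTerm]
  refine Finset.sum_congr rfl fun i _ => Finset.sum_congr rfl fun j _ => ?_
  simpa using trinomialTerm_mul_mul m σ 1 x y i j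

lemma sum_add_mul_trinomialTerm (m : ℕ) (x y : ℝ) :
    ∑ i ∈ Finset.range (m + 1), ∑ j ∈ Finset.range (i + 1),
        ((i + j : ℕ) : ℝ) * trinomialTerm m x y i j
      = (2 * m : ℕ) * (x + y) ^ (2 * m - 1) * y := by
  rw [add_comm x]
  refine (sum_mul_eq_of_forall_pow_eq _ _ _ _ fun σ => ?_).symm
  rw [add_comm, add_pow_two_mul_eq_sum_trinomialTerm]
  refine Finset.sum_congr rfl fun i _ => Finset.sum_congr rfl fun j _ => ?_
  simpa using trinomialTerm_mul_mul m 1 σ x y i j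

def amgmGap (p : ℕ) (s t : ℝ) (k : ℕ) : ℝ :=
  ((p - k : ℕ) : ℝ) * s ^ p + k * t ^ p - p * (s ^ (p - k) * t ^ k)

lemma amgmGap_nonneg {s t : ℝ} (hs : 0 ≤ s) (ht : 0 ≤ t) {p k : ℕ} (hk : k ≤ p) :
    0 ≤ amgmGap p s t k :=
  sub_nonneg.2 (mul_pow_sub_mul_pow_le hs ht hk)

lemma sum_trinomialTerm_mul_amgmGap (m : ℕ) (s t x y : ℝ) :
    ∑ i ∈ Finset.range (m + 1), ∑ j ∈ Finset.range (i + 1),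
        trinomialTerm m x y i j * amgmGap (2 * m) s t (i + j)
      = s ^ (2 * m) * ((2 * m : ℕ) * (x + y) ^ (2 * m - 1) * x)
        + t ^ (2 * m) * ((2 * m : ℕ) * (x + y) ^ (2 * m - 1) * y)
        - (2 * m : ℕ) * (s * x + t * y) ^ (2 * m) := by
  rw [← sum_sub_mul_trinomialTerm, ← sum_add_mul_trinomialTerm,
    add_pow_two_mul_eq_sum_trinomialTerm]
  simp only [Finset.mul_sum, ← Finset.sum_add_distrib, ← Finset.sum_sub_distrib,
    trinomialTerm_mul_mul, amgmGap]
  refine Finset.sum_congr rfl fun i _ => Finset.sum_congr rfl fun j _ => ?_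
  ring

lemma Theta_eq {p : ℕ} (hp : Even p) (s t : ℝ) {i j : ℕ} (hj1 : 1 ≤ j) (hji : j ≤ i)
    (hi : i ≤ p / 2) :
    Theta p s t i j = (p / 2).choose i * i.choose j / (p : ℝ) ^ 2 * amgmGap p s t (i + j) := by
  obtain ⟨m, rfl⟩ : ∃ m, p = 2 * m := ⟨p / 2, (Nat.two_mul_div_two_of_even hp).symm⟩
  obtain ⟨m, rfl⟩ : ∃ m', m = m' + 1 := ⟨m - 1, by omega⟩
  obtain ⟨i, rfl⟩ : ∃ i', i = i' + 1 := ⟨i - 1, by omega⟩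
  obtain ⟨j, rfl⟩ : ∃ j', j = j' + 1 := ⟨j - 1, by omega⟩
  have hm : 2 * (m + 1) / 2 = m + 1 := by omega
  rw [hm] at hi
  have hk : i + 1 + (j + 1) ≤ 2 * (m + 1) := by omega
  -- every binomial coefficient in `Theta` is a rational multiple of the one on the right
  have e1 : (m.choose (i + 1) : ℝ) = (m + 1).choose (i + 1) * (m - i) / (m + 1) := by
    rw [eq_div_iff (by positivity), ← Nat.cast_sub (by omega), ← Nat.cast_succ, ← Nat.cast_mul,
      ← Nat.cast_mul, Nat.choose_mul_succ_eq]
    simp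
  have e2 : (m.choose i : ℝ) = (m + 1).choose (i + 1) * (i + 1) / (m + 1) := by
    rw [eq_div_iff (by positivity), mul_comm]
    exact_mod_cast Nat.add_one_mul_choose_eq m i
  have e3 : (i.choose (j + 1) : ℝ) = (i + 1).choose (j + 1) * (i - j) / (i + 1) := by
    rw [eq_div_iff (by positivity), ← Nat.cast_sub (by omega), ← Nat.cast_succ, ← Nat.cast_mul,
      ← Nat.cast_mul, Nat.choose_mul_succ_eq]
    simp
  have e4 : (i.choose j : ℝ) = (i + 1).choose (j + 1) * (j + 1) / (i + 1) := by
    rw [eq_div_iff (by positivity), mul_comm]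
    exact_mod_cast Nat.add_one_mul_choose_eq i j
  simp only [Theta, amgmGap, hm, Nat.add_sub_cancel, e1, e2, e3, e4, Nat.cast_sub hk]
  field_simp
  push_cast
  ring

lemma Theta_nonneg {p : ℕ} (hp : Even p) {s t : ℝ} (hs : 0 ≤ s) (ht : 0 ≤ t) {i j : ℕ}
    (hj1 : 1 ≤ j) (hji : j ≤ i) (hi : i ≤ p / 2) : 0 ≤ Theta p s t i j := by
  rw [Theta_eq hp s t hj1 hji hi]
  have := amgmGap_nonneg hs ht (p := p) (k := i + j) (by omega)
  positivity

def mixedSum (p : ℕ) (s t α β : ℝ) : ℝ :=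
  ∑ i ∈ Finset.Icc 1 (p / 2 - 1), ∑ j ∈ Finset.Icc 1 (i - 1),
    (2 : ℝ) ^ (i - j) * α ^ (p - (i + j)) * β ^ (i + j) * Theta p s t i j

section mixedSum

variable {p : ℕ} {s t : ℝ}

lemma bounds_of_mem_Icc_Icc {i j : ℕ} (hi : i ∈ Finset.Icc 1 (p / 2 - 1))
    (hj : j ∈ Finset.Icc 1 (i - 1)) : 1 ≤ j ∧ j ≤ i ∧ i ≤ p / 2 := by
  simp only [Finset.mem_Icc] at hi hj
  omega

lemma Theta_nonneg_of_mem_Icc (hp : Even p) (hs : 0 ≤ s) (ht : 0 ≤ t) {i j : ℕ}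
    (hi : i ∈ Finset.Icc 1 (p / 2 - 1)) (hj : j ∈ Finset.Icc 1 (i - 1)) : 0 ≤ Theta p s t i j :=
  have ⟨hj1, hji, hi⟩ := bounds_of_mem_Icc_Icc hi hj
  Theta_nonneg hp hs ht hj1 hji hi

lemma sq_mul_mixedSum (hp : Even p) (α β : ℝ) :
    (p : ℝ) ^ 2 * mixedSum p s t α β = ∑ i ∈ Finset.Icc 1 (p / 2 - 1), ∑ j ∈ Finset.Icc 1 (i - 1),
      trinomialTerm (p / 2) α β i j * amgmGap p s t (i + j) := by
  rw [mixedSum, Finset.mul_sum]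
  refine Finset.sum_congr rfl fun i hi => ?_
  rw [Finset.mul_sum]
  refine Finset.sum_congr rfl fun j hj => ?_
  obtain ⟨hj1, hji, hi⟩ := bounds_of_mem_Icc_Icc hi hj
  have hp0 : (p : ℝ) ≠ 0 := by norm_cast; omega
  rw [Theta_eq hp s t hj1 hji hi, trinomialTerm, Nat.two_mul_div_two_of_even hp]
  field_simp

lemma sq_mul_mixedSum_le (hp : Even p) (hs : 0 ≤ s) (ht : 0 ≤ t) {α β : ℝ} (hα : 0 ≤ α)
    (hβ : 0 ≤ β) :
    (p : ℝ) ^ 2 * mixedSum p s t α β ≤ ∑ i ∈ Finset.range (p / 2 + 1), ∑ j ∈ Finset.range (i + 1),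
      trinomialTerm (p / 2) α β i j * amgmGap p s t (i + j) := by
  have hterm : ∀ i ∈ Finset.range (p / 2 + 1), ∀ j ∈ Finset.range (i + 1),
      0 ≤ trinomialTerm (p / 2) α β i j * amgmGap p s t (i + j) := fun i hi j hj => by
    simp only [Finset.mem_range] at hi hj
    have := amgmGap_nonneg hs ht (p := p) (k := i + j) (by omega)
    unfold trinomialTerm
    positivity
  rw [sq_mul_mixedSum hp]
  calc ∑ i ∈ Finset.Icc 1 (p / 2 - 1), ∑ j ∈ Finset.Icc 1 (i - 1),
        trinomialTerm (p / 2) α β i j * amgmGap p s t (i + j)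
      ≤ ∑ i ∈ Finset.Icc 1 (p / 2 - 1), ∑ j ∈ Finset.range (i + 1),
        trinomialTerm (p / 2) α β i j * amgmGap p s t (i + j) := by
        refine Finset.sum_le_sum fun i hi => Finset.sum_le_sum_of_subset_of_nonneg
          (fun j hj => ?_) fun j hj _ => hterm i ?_ j hj
        · simp only [Finset.mem_Icc, Finset.mem_range] at hj ⊢; omega
        · simp only [Finset.mem_Icc, Finset.mem_range] at hi ⊢; omega
    _ ≤ _ := Finset.sum_le_sum_of_subset_of_nonneg (fun i hi => by
          simp only [Finset.mem_Icc, Finset.mem_range] at hi ⊢; omega)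
        fun i hi _ => Finset.sum_nonneg (hterm i hi)

lemma mixedSum_le (hp : Even p) (hs : 0 ≤ s) (ht : 0 ≤ t) {α β D : ℝ} (hα : 0 ≤ α) (hαD : α ≤ D)
    (hβ : 0 ≤ β) (hβD : β ≤ D) :
    mixedSum p s t α β ≤ mixedSum p s t 1 1 * D ^ p := by
  rw [mixedSum, mixedSum, Finset.sum_mul]
  refine Finset.sum_le_sum fun i hi => ?_
  rw [Finset.sum_mul]
  refine Finset.sum_le_sum fun j hj => ?_
  have := Theta_nonneg_of_mem_Icc hp hs ht hi hj
  obtain ⟨hj1, hji, hi⟩ := bounds_of_mem_Icc_Icc hi hj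
  calc (2 : ℝ) ^ (i - j) * α ^ (p - (i + j)) * β ^ (i + j) * Theta p s t i j
      ≤ 2 ^ (i - j) * D ^ (p - (i + j)) * D ^ (i + j) * Theta p s t i j := by
        have := hα.trans hαD
        gcongr
    _ = _ := by
        rw [one_pow, one_pow, ← pow_mul_pow_sub D (show i + j ≤ p by omega)]
        ring

lemma mixedSum_nonneg (hp : Even p) (hs : 0 ≤ s) (ht : 0 ≤ t) {α β : ℝ} (hα : 0 ≤ α)
    (hβ : 0 ≤ β) : 0 ≤ mixedSum p s t α β :=
  Finset.sum_nonneg fun i hi => Finset.sum_nonneg fun j hj => by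
    have := Theta_nonneg_of_mem_Icc hp hs ht hi hj
    positivity

end mixedSum

lemma mixedSum_add_le {p : ℕ} (hp : Even p) (hp0 : 0 < p) {q : ℝ} (hpq : (p : ℝ) < q)
    {s t α β : ℝ} (hs : 0 ≤ s) (ht : 0 ≤ t) (hα : 0 ≤ α) (hβ : 0 ≤ β) :
    1 / p * (s * α + t * β) ^ p + (1 - s ^ q) / q * ((α + β) ^ (p - 1) * α)
      + (1 - t ^ q) / q * ((α + β) ^ (p - 1) * β)
      + ((1 - s ^ p) / p - (1 - s ^ q) / q) * α ^ p + ((1 - t ^ p) / p - (1 - t ^ q) / q) * β ^ p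
      + mixedSum p s t α β ≤ 1 / p * (α + β) ^ p := by
  have hp' : (0 : ℝ) < p := by exact_mod_cast hp0
  have hD : ∀ {σ : ℝ}, 0 ≤ σ → 0 ≤ (1 - σ ^ p) / p - (1 - σ ^ q) / q := fun hσ =>
    sub_nonneg.2 (by simpa using one_sub_rpow_div_le hp' hpq.le hσ)
  have hpow : ∀ {x : ℝ}, 0 ≤ x → x ≤ α + β → x ^ p ≤ (α + β) ^ (p - 1) * x := fun hx hxαβ => by
    rw [← pow_sub_one_mul hp0.ne']
    gcongr
  have hsplit : (α + β) ^ p = (α + β) ^ (p - 1) * α + (α + β) ^ (p - 1) * β := by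
    rw [← mul_add, pow_sub_one_mul hp0.ne']
  have hM : mixedSum p s t α β ≤ (s ^ p * ((α + β) ^ (p - 1) * α)
      + t ^ p * ((α + β) ^ (p - 1) * β) - (s * α + t * β) ^ p) / p := by
    have h := sq_mul_mixedSum_le hp hs ht hα hβ
    obtain ⟨m, rfl⟩ : ∃ m, p = 2 * m := ⟨p / 2, (Nat.two_mul_div_two_of_even hp).symm⟩
    rw [show 2 * m / 2 = m by omega, sum_trinomialTerm_mul_amgmGap] at h
    rw [le_div_iff₀ hp']
    nlinarith
  have hDα := mul_nonneg (hD hs) (sub_nonneg.2 (hpow hα (by linarith)))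
  have hDβ := mul_nonneg (hD ht) (sub_nonneg.2 (hpow hβ (by linarith)))
  rw [hsplit]
  generalize (α + β) ^ (p - 1) * α = X at *
  generalize (α + β) ^ (p - 1) * β = Y at *
  have key : 1 / p * (X + Y) - (1 / p * (s * α + t * β) ^ p + (1 - s ^ q) / q * X
      + (1 - t ^ q) / q * Y + ((1 - s ^ p) / p - (1 - s ^ q) / q) * α ^ p
      + ((1 - t ^ p) / p - (1 - t ^ q) / q) * β ^ p + mixedSum p s t α β)
      = ((1 - s ^ p) / p - (1 - s ^ q) / q) * (X - α ^ p)
        + ((1 - t ^ p) / p - (1 - t ^ q) / q) * (Y - β ^ p)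
        + ((s ^ p * X + t ^ p * Y - (s * α + t * β) ^ p) / p - mixedSum p s t α β) := by
    ring
  linarith

lemma max_sub_max_mul_min_sub_min_nonneg (x y : ℝ) :
    0 ≤ (max y 0 - max x 0) * (min y 0 - min x 0) := by
  rcases le_total x 0 with hx | hx <;> rcases le_total y 0 with hy | hy <;>
    simp only [max_eq_left, max_eq_right, min_eq_left, min_eq_right, hx, hy] <;> nlinarith

lemma kinetic_ineq {p : ℕ} (hp : Even p) (hp2 : 2 ≤ p) {q : ℝ} (hpq : (p : ℝ) < q)
    {s t A B : ℝ} (hs : 0 ≤ s) (ht : 0 ≤ t) (hAB : 0 ≤ A * B) :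
    1 / p * |s * A + t * B| ^ p + (1 - s ^ q) / q * (|A + B| ^ (p - 2) * (A + B) * A)
      + (1 - t ^ q) / q * (|A + B| ^ (p - 2) * (A + B) * B)
      + ((1 - s ^ p) / p - (1 - s ^ q) / q) * |A| ^ p
      + ((1 - t ^ p) / p - (1 - t ^ q) / q) * |B| ^ p
      + mixedSum p s t |A| |B| ≤ 1 / p * |A + B| ^ p := by
  obtain ⟨h1, h2, h3, h4⟩ : |s * A + t * B| = s * |A| + t * |B| ∧ |A + B| = |A| + |B| ∧
      (A + B) * A = (|A| + |B|) * |A| ∧ (A + B) * B = (|A| + |B|) * |B| := by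
    rcases mul_nonneg_iff.1 hAB with ⟨hA, hB⟩ | ⟨hA, hB⟩
    · rw [abs_of_nonneg hA, abs_of_nonneg hB, abs_of_nonneg (by positivity),
        abs_of_nonneg (by positivity)]
      exact ⟨rfl, rfl, rfl, rfl⟩
    · rw [abs_of_nonpos hA, abs_of_nonpos hB, abs_of_nonpos (by nlinarith),
        abs_of_nonpos (by linarith)]
      refine ⟨?_, ?_, ?_, ?_⟩ <;> ring
  have hpow : ∀ C, (|A| + |B|) ^ (p - 2) * ((|A| + |B|) * C) = (|A| + |B|) ^ (p - 1) * C := by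
    intro C
    rw [← mul_assoc, ← pow_succ, show p - 2 + 1 = p - 1 by omega]
  rw [mul_assoc _ (A + B), mul_assoc _ (A + B), h1, h2, h3, h4, hpow, hpow]
  exact mixedSum_add_le hp (by omega) hpq hs ht (abs_nonneg A) (abs_nonneg B)

lemma log_ineq_of_nonneg {q r σ y : ℝ} (hq : 0 < q) (hr : 0 ≤ r) (hσ : 0 ≤ σ) (hy : 0 ≤ y) :
    r / q ^ 2 * (σ * y) ^ q - 1 / q * ((σ * y) ^ q * Real.log ((σ * y) ^ r))
      - (1 - σ ^ q) / q * (y ^ q * Real.log (y ^ r))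
      ≤ r / q ^ 2 * y ^ q - 1 / q * (y ^ q * Real.log (y ^ r)) := by
  rcases hy.eq_or_lt with rfl | hy
  · simp [Real.zero_rpow hq.ne']
  rcases hσ.eq_or_lt with rfl | hσ
  · have : 0 ≤ r / q ^ 2 * y ^ q := by positivity
    simp only [zero_mul, Real.zero_rpow hq.ne', mul_zero, sub_zero]
    linarith
  have hY := Real.self_sub_one_le_mul_log (Real.rpow_nonneg hσ.le q)
  rw [Real.mul_rpow hσ.le hy.le, Real.log_rpow (by positivity), Real.log_rpow hy,
    Real.log_mul hσ.ne' hy.ne']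
  rw [Real.log_rpow hσ] at hY
  have key : r / q ^ 2 * y ^ q - 1 / q * (y ^ q * (r * Real.log y))
      - (r / q ^ 2 * (σ ^ q * y ^ q) - 1 / q * (σ ^ q * y ^ q * (r * (Real.log σ + Real.log y)))
        - (1 - σ ^ q) / q * (y ^ q * (r * Real.log y)))
      = r / q ^ 2 * y ^ q * (1 - σ ^ q + σ ^ q * (q * Real.log σ)) := by
    field_simp
    ring
  have : 0 ≤ r / q ^ 2 * y ^ q * (1 - σ ^ q + σ ^ q * (q * Real.log σ)) :=
    mul_nonneg (by positivity) (by linarith)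
  linarith

lemma onsite_ineq_of_nonneg {p : ℕ} (hp2 : 2 ≤ p) {q r B C σ y : ℝ} (hq : 0 < q) (hr : 0 ≤ r)
    (hC : 0 ≤ C) (hσ : 0 ≤ σ) (hy : 0 ≤ y) :
    1 / p * (B * (σ * y) ^ p) + r / q ^ 2 * (C * (σ * y) ^ q)
      - 1 / q * (C * (σ * y) ^ q * Real.log ((σ * y) ^ r))
      + (1 - σ ^ q) / q * (B * y ^ (p - 2) * y * y - C * y ^ (q - 2) * y * y * Real.log (y ^ r))
      + ((1 - σ ^ p) / p - (1 - σ ^ q) / q) * (B * y ^ p)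
      ≤ 1 / p * (B * y ^ p) + r / q ^ 2 * (C * y ^ q) - 1 / q * (C * y ^ q * Real.log (y ^ r)) := by
  have hlog := mul_le_mul_of_nonneg_left (log_ineq_of_nonneg hq hr hσ hy) hC
  have hB : B * y ^ (p - 2) * y * y = B * y ^ p := by rw [← pow_sub_two_mul_self hp2]; ring
  have hC' : C * y ^ (q - 2) * y * y * Real.log (y ^ r) = C * y ^ q * Real.log (y ^ r) := by
    rw [← rpow_sub_two_mul_self hq.ne' hy]; ring
  rw [hB, hC', mul_pow]
  linear_combination hlog

lemma onsite_ineq {p : ℕ} (hp2 : 2 ≤ p) {q r B C s t : ℝ} (hq : 0 < q) (hr : 0 ≤ r) (hC : 0 ≤ C)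
    (hs : 0 ≤ s) (ht : 0 ≤ t) (x : ℝ) :
    1 / p * (B * |s * max x 0 + t * min x 0| ^ p)
      + r / q ^ 2 * (C * |s * max x 0 + t * min x 0| ^ q)
      - 1 / q * (C * |s * max x 0 + t * min x 0| ^ q
        * Real.log (|s * max x 0 + t * min x 0| ^ r))
      + (1 - s ^ q) / q * (B * |x| ^ (p - 2) * x * max x 0
        - C * |x| ^ (q - 2) * x * max x 0 * Real.log (|x| ^ r))
      + (1 - t ^ q) / q * (B * |x| ^ (p - 2) * x * min x 0
        - C * |x| ^ (q - 2) * x * min x 0 * Real.log (|x| ^ r))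
      + ((1 - s ^ p) / p - (1 - s ^ q) / q) * (B * |max x 0| ^ p)
      + ((1 - t ^ p) / p - (1 - t ^ q) / q) * (B * |min x 0| ^ p)
      ≤ 1 / p * (B * |x| ^ p) + r / q ^ 2 * (C * |x| ^ q)
        - 1 / q * (C * |x| ^ q * Real.log (|x| ^ r)) := by
  have h0 : (0 : ℝ) ^ p = 0 := zero_pow (by omega)
  rcases le_total 0 x with hx | hx
  · have := onsite_ineq_of_nonneg hp2 hq hr hC hs hx (B := B)
    rw [max_eq_left hx, min_eq_right hx, abs_of_nonneg hx, mul_zero, add_zero,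
      abs_of_nonneg (mul_nonneg hs hx), abs_zero, h0]
    linarith
  · obtain ⟨y, hy, rfl⟩ : ∃ y, 0 ≤ y ∧ x = -y := ⟨-x, by linarith, by ring⟩
    have := onsite_ineq_of_nonneg hp2 hq hr hC ht hy (B := B)
    rw [max_eq_right hx, min_eq_left hx, abs_neg, abs_of_nonneg hy, mul_zero, zero_add, mul_neg,
      abs_neg, abs_of_nonneg (mul_nonneg ht hy), abs_zero, h0]
    linarith

section PosNeg

variable (u : ℤ → ℝ) (n : ℤ)

lemma abs_pos_apply_le : |pos u n| ≤ |u n| := by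
  simpa [pos] using abs_max_sub_max_le_abs (u n) 0 0

lemma abs_neg_apply_le : |neg u n| ≤ |u n| := by
  simpa [neg] using abs_min_sub_min_le_max (u n) 0 0 0

lemma abs_dlt_pos_le : |dlt (pos u) n| ≤ |dlt u n| :=
  abs_max_sub_max_le_abs _ _ _

lemma abs_dlt_neg_le : |dlt (neg u) n| ≤ |dlt u n| := by
  simpa [dlt, neg] using abs_min_sub_min_le_max (u (n + 1)) 0 (u n) 0

lemma dlt_pos_add_dlt_neg : dlt (pos u) n + dlt (neg u) n = dlt u n := by
  simp only [dlt, pos, neg]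
  linarith [max_add_min (u (n + 1)) 0, max_add_min (u n) 0]

lemma dlt_mul_pos_add_mul_neg (s t : ℝ) :
    dlt (fun n => s * pos u n + t * neg u n) n = s * dlt (pos u) n + t * dlt (neg u) n := by
  simp only [dlt]
  ring

end PosNeg

def enDensity (a b c : ℤ → ℝ) (p : ℕ) (q r : ℝ) (v : ℤ → ℝ) (n : ℤ) : ℝ :=
  1 / p * nsum a b p v n + r / q ^ 2 * (c n * |v n| ^ q) - 1 / q * logSummand c q r v n

def prDensity (a b c : ℤ → ℝ) (p : ℕ) (q r : ℝ) (u v : ℤ → ℝ) (n : ℤ) : ℝ :=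
  a n * |dlt u n| ^ (p - 2) * dlt u n * dlt v n + b n * |u n| ^ (p - 2) * u n * v n
    - c n * |u n| ^ (q - 2) * u n * v n * Real.log (|u n| ^ r)

lemma density_le {p : ℕ} (hp : Even p) (hp2 : 2 ≤ p) {q r s t : ℝ} (hpq : (p : ℝ) < q)
    (hr : 0 ≤ r) (hs : 0 ≤ s) (ht : 0 ≤ t) {a b c : ℤ → ℝ} {n : ℤ} (ha : 0 ≤ a n)
    (hc : 0 ≤ c n) (u : ℤ → ℝ) :
    enDensity a b c p q r (fun n => s * pos u n + t * neg u n) n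
      + (1 - s ^ q) / q * prDensity a b c p q r u (pos u) n
      + (1 - t ^ q) / q * prDensity a b c p q r u (neg u) n
      + ((1 - s ^ p) / p - (1 - s ^ q) / q) * nsum a b p (pos u) n
      + ((1 - t ^ p) / p - (1 - t ^ q) / q) * nsum a b p (neg u) n
      + a n * mixedSum p s t |dlt (pos u) n| |dlt (neg u) n|
      ≤ enDensity a b c p q r u n := by
  have hkin := mul_le_mul_of_nonneg_left (kinetic_ineq hp hp2 hpq hs ht
    (A := dlt (pos u) n) (B := dlt (neg u) n)
    (max_sub_max_mul_min_sub_min_nonneg (u n) (u (n + 1)))) ha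
  rw [dlt_pos_add_dlt_neg] at hkin
  have hons := onsite_ineq hp2 ((Nat.cast_nonneg p).trans_lt hpq) hr hc hs ht (u n) (B := b n)
  simp only [enDensity, prDensity, nsum, logSummand, dlt_mul_pos_add_mul_neg]
  simp only [pos, neg] at hkin ⊢
  linarith

section Summability

variable {a b c : ℤ → ℝ} {p : ℕ} {q r b0 c0 : ℝ} {u v : ℤ → ℝ}

lemma nsum_nonneg (ha : ∀ n, 0 ≤ a n) (hb : ∀ n, 0 ≤ b n) (v : ℤ → ℝ) (n : ℤ) :
    0 ≤ nsum a b p v n :=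
  add_nonneg (mul_nonneg (ha n) (by positivity)) (mul_nonneg (hb n) (by positivity))

lemma hasSum_nsum (hp : p ≠ 0) (ha : ∀ n, 0 ≤ a n) (hb : ∀ n, 0 ≤ b n) (hv : memE a b p v) :
    HasSum (nsum a b p v) (dnorm a b p v ^ p) := by
  rw [dnorm, ← Real.rpow_natCast, ← Real.rpow_mul (tsum_nonneg (nsum_nonneg ha hb v)),
    inv_mul_cancel₀ (by exact_mod_cast hp), Real.rpow_one]
  exact hv.hasSum

lemma memE_of_abs_le (ha : ∀ n, 0 ≤ a n) (hb : ∀ n, 0 ≤ b n) {K : ℝ}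
    (hv : ∀ n, |v n| ≤ K * |u n|) (hdv : ∀ n, |dlt v n| ≤ K * |dlt u n|) (hu : memE a b p u) :
    memE a b p v :=
  (hu.mul_left (K ^ p)).of_nonneg_of_le (nsum_nonneg ha hb v) fun n => by
    have := ha n
    have := hb n
    calc nsum a b p v n ≤ a n * (K * |dlt u n|) ^ p + b n * (K * |u n|) ^ p := by
          unfold nsum
          gcongr
          exacts [hdv n, hv n]
      _ = K ^ p * nsum a b p u n := by unfold nsum; ring

lemma abs_pow_le_nsum_div (ha : ∀ n, 0 ≤ a n) (hb0 : 0 < b0) (hbb : ∀ n, b0 ≤ b n) (n : ℤ) :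
    |u n| ^ p ≤ nsum a b p u n / b0 := by
  rw [le_div_iff₀ hb0, nsum]
  nlinarith [mul_le_mul_of_nonneg_right (hbb n) (pow_nonneg (abs_nonneg (u n)) p),
    mul_nonneg (ha n) (pow_nonneg (abs_nonneg (dlt u n)) p)]

lemma summable_of_eventually_abs_le (ha : ∀ n, 0 ≤ a n) (hb0 : 0 < b0) (hbb : ∀ n, b0 ≤ b n)
    (hu : memE a b p u) {f : ℤ → ℝ} {C : ℝ} (hC : 0 ≤ C)
    (hf : ∀ᶠ n in cofinite, |f n| ≤ C * |u n| ^ p) : Summable f :=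
  Summable.of_norm_bounded_eventually (hu.mul_left (C / b0)) <| hf.mono fun n hn =>
    hn.trans <| by
      rw [div_mul_eq_mul_div, mul_div_assoc]
      exact mul_le_mul_of_nonneg_left (abs_pow_le_nsum_div ha hb0 hbb n) hC

lemma eventually_abs_le_one (hp : p ≠ 0) (ha : ∀ n, 0 ≤ a n) (hb0 : 0 < b0)
    (hbb : ∀ n, b0 ≤ b n) (hu : memE a b p u) {K : ℝ} (hK : 0 ≤ K)
    (hv : ∀ n, |v n| ≤ K * |u n|) : ∀ᶠ n in cofinite, |v n| ≤ 1 := by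
  have hlim : Tendsto (fun n => |v n| ^ p) cofinite (nhds 0) := by
    refine squeeze_zero (fun n => by positivity) (fun n => ?_)
      (by simpa only [mul_zero] using hu.tendsto_cofinite_zero.const_mul (K ^ p / b0))
    calc |v n| ^ p ≤ K ^ p * |u n| ^ p := by rw [← mul_pow]; gcongr; exact hv n
      _ ≤ K ^ p * (nsum a b p u n / b0) := by gcongr; exact abs_pow_le_nsum_div ha hb0 hbb n
      _ = K ^ p / b0 * nsum a b p u n := by ring
  filter_upwards [hlim.eventually (gt_mem_nhds one_pos)] with n hn
  exact ((pow_lt_one_iff_of_nonneg (abs_nonneg _) hp).1 hn).le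

lemma hasSum_En_of_abs_le (hp : p ≠ 0) (hpq : (p : ℝ) < q) (hr : 0 ≤ r) (ha : ∀ n, 0 ≤ a n)
    (hb : ∀ n, 0 ≤ b n) (hc : ∀ n, 0 ≤ c n) (hb0 : 0 < b0) (hbb : ∀ n, b0 ≤ b n)
    (hcc : ∀ n, c n ≤ c0) (hu : memE a b p u) {K : ℝ} (hK : 0 ≤ K)
    (hv : ∀ n, |v n| ≤ K * |u n|) (hdv : ∀ n, |dlt v n| ≤ K * |dlt u n|) :
    HasSum (enDensity a b c p q r v) (En a b c p q r v) := by
  have hc0 : 0 ≤ c0 := (hc 0).trans (hcc 0)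
  have hsmall := eventually_abs_le_one hp ha hb0 hbb hu hK hv
  have hvp : ∀ n, |v n| ^ p ≤ K ^ p * |u n| ^ p := fun n => by
    rw [← mul_pow]
    gcongr
    exact hv n
  have hpow : Summable fun n => c n * |v n| ^ q := by
    refine summable_of_eventually_abs_le ha hb0 hbb hu (C := c0 * K ^ p) (by positivity)
      (hsmall.mono fun n hn => ?_)
    have hqp : |v n| ^ q ≤ |v n| ^ p := by
      simpa using Real.rpow_le_rpow_of_exponent_ge' (abs_nonneg _) hn (Nat.cast_nonneg p) hpq.le
    rw [abs_of_nonneg (mul_nonneg (hc n) (by positivity)), mul_assoc]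
    exact mul_le_mul (hcc n) (hqp.trans (hvp n)) (by positivity) hc0
  have hlog : Summable (logSummand c q r v) := by
    refine summable_of_eventually_abs_le ha hb0 hbb hu (C := c0 * (r / (q - p) * K ^ p))
      (by have := sub_pos.2 hpq; positivity) (hsmall.mono fun n hn => ?_)
    have hl := rpow_mul_abs_log_rpow_le (abs_nonneg (v n)) hn hr hpq
    rw [Real.rpow_natCast] at hl
    rw [logSummand, abs_mul, abs_mul, abs_of_nonneg (hc n), abs_of_nonneg (by positivity),
      mul_assoc, mul_assoc]
    refine mul_le_mul (hcc n) (hl.trans ?_) (by positivity) hc0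
    rw [mul_assoc]
    exact mul_le_mul_of_nonneg_left (hvp n) (div_nonneg hr (sub_pos.2 hpq).le)
  exact (((hasSum_nsum hp ha hb (memE_of_abs_le ha hb hv hdv hu)).mul_left _).add
    (hpow.hasSum.mul_left _)).sub (hlog.hasSum.mul_left _)

lemma abs_mul_pow_sub_two_mul_mul_le (hp2 : 2 ≤ p) {A x y : ℝ} (hA : 0 ≤ A) (hy : |y| ≤ |x|) :
    |A * |x| ^ (p - 2) * x * y| ≤ A * |x| ^ p := by
  calc |A * |x| ^ (p - 2) * x * y| = A * |x| ^ (p - 2) * |x| * |y| := by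
        rw [abs_mul, abs_mul, abs_mul, abs_of_nonneg hA, abs_of_nonneg (by positivity)]
    _ ≤ A * |x| ^ (p - 2) * |x| * |x| := by gcongr
    _ = A * |x| ^ p := by rw [← pow_sub_two_mul_self hp2 |x|]; ring

lemma abs_mul_rpow_sub_two_mul_mul_le (hq : q ≠ 0) {C x y L : ℝ} (hC : 0 ≤ C) (hy : |y| ≤ |x|) :
    |C * |x| ^ (q - 2) * x * y * L| ≤ |C * |x| ^ q * L| := by
  have h : 0 ≤ |x| ^ (q - 2) := Real.rpow_nonneg (abs_nonneg x) _
  calc |C * |x| ^ (q - 2) * x * y * L| = C * |x| ^ (q - 2) * |x| * |y| * |L| := by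
        rw [abs_mul, abs_mul, abs_mul, abs_mul, abs_of_nonneg hC, abs_of_nonneg h]
    _ ≤ C * |x| ^ (q - 2) * |x| * |x| * |L| := by gcongr
    _ = |C * |x| ^ q * L| := by
        rw [abs_mul, abs_mul, abs_of_nonneg hC, ← rpow_sub_two_mul_self hq (abs_nonneg x),
          abs_of_nonneg (by positivity : 0 ≤ |x| ^ (q - 2) * |x| * |x|)]
        ring

lemma hasSum_pr_of_abs_le (hp2 : 2 ≤ p) (hq : q ≠ 0) (ha : ∀ n, 0 ≤ a n) (hb : ∀ n, 0 ≤ b n)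
    (hc : ∀ n, 0 ≤ c n) (hu : memD a b c p q r u) (hv : ∀ n, |v n| ≤ |u n|)
    (hdv : ∀ n, |dlt v n| ≤ |dlt u n|) :
    HasSum (prDensity a b c p q r u v) (pr a b c p q r u v) := by
  have hab : Summable fun n => a n * |dlt u n| ^ (p - 2) * dlt u n * dlt v n
      + b n * |u n| ^ (p - 2) * u n * v n :=
    hu.1.of_norm_bounded fun n => (norm_add_le _ _).trans <| add_le_add
      (abs_mul_pow_sub_two_mul_mul_le hp2 (ha n) (hdv n))
      (abs_mul_pow_sub_two_mul_mul_le hp2 (hb n) (hv n))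
  have hlog : Summable fun n => c n * |u n| ^ (q - 2) * u n * v n * Real.log (|u n| ^ r) :=
    hu.2.abs.of_norm_bounded fun n => abs_mul_rpow_sub_two_mul_mul_le hq (hc n) (hv n)
  exact hab.hasSum.sub hlog.hasSum

lemma summable_mul_mixedSum {s t : ℝ} (hp : Even p) (hs : 0 ≤ s) (ht : 0 ≤ t)
    (ha : ∀ n, 0 ≤ a n) (hb : ∀ n, 0 ≤ b n) (hu : memE a b p u) {f g : ℤ → ℝ} (hf : ∀ n, |f n| ≤ |dlt u n|) (hg : ∀ n, |g n| ≤ |dlt u n|) :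
    Summable fun n => a n * mixedSum p s t |f n| |g n| :=
  (hu.mul_left (mixedSum p s t 1 1)).of_nonneg_of_le
    (fun n => mul_nonneg (ha n) (mixedSum_nonneg hp hs ht (abs_nonneg _) (abs_nonneg _)))
    fun n => by
      have h1 := mixedSum_nonneg hp hs ht zero_le_one zero_le_one
      have h2 := mul_le_mul_of_nonneg_left
        (mixedSum_le hp hs ht (abs_nonneg _) (hf n) (abs_nonneg _) (hg n)) (ha n)
      have h3 := mul_nonneg (hb n) (pow_nonneg (abs_nonneg (u n)) p)
      unfold nsum
      nlinarith

end Summability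

theorem stmt5_general (p : ℕ) (hp2 : 2 ≤ p) (hpe : Even p)
    (q r : ℝ) (hpq : (p : ℝ) < q) (hr : 1 ≤ r)
    (a b c : ℤ → ℝ)
    (ha : ∀ n, 0 < a n) (hb : ∀ n, 0 < b n) (hc : ∀ n, 0 < c n)
    (b0 : ℝ) (hb0 : 0 < b0) (hbb : ∀ n, b0 ≤ b n)
    (c0 : ℝ) (hcc : ∀ n, c n ≤ c0)
    (u : ℤ → ℝ) (hu : memD a b c p q r u)
    (s t : ℝ) (hs : 0 ≤ s) (ht : 0 ≤ t) :
    (∀ i ∈ Finset.Icc 1 (p / 2 - 1), ∀ j ∈ Finset.Icc 1 (i - 1),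
      0 ≤ Theta p s t i j) ∧
    En a b c p q r (fun n => s * pos u n + t * neg u n)
        + ((1 - s ^ q) / q) * pr a b c p q r u (pos u)
        + ((1 - t ^ q) / q) * pr a b c p q r u (neg u)
        + ((1 - s ^ p) / (p : ℝ) - (1 - s ^ q) / q) * dnorm a b p (pos u) ^ p
        + ((1 - t ^ p) / (p : ℝ) - (1 - t ^ q) / q) * dnorm a b p (neg u) ^ p
        + (∑' n : ℤ, a n *
            ∑ i ∈ Finset.Icc 1 (p / 2 - 1), ∑ j ∈ Finset.Icc 1 (i - 1),
              (2 : ℝ) ^ (i - j) * |dlt (pos u) n| ^ (p - (i + j))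
                * |dlt (neg u) n| ^ (i + j) * Theta p s t i j)
      ≤ En a b c p q r u := by
  refine ⟨fun i hi j hj => Theta_nonneg_of_mem_Icc hpe hs ht hi hj, ?_⟩
  have hp0 : p ≠ 0 := by omega
  have hr0 : 0 ≤ r := by linarith
  have ha' := fun n => (ha n).le
  have hb' := fun n => (hb n).le
  have hc' := fun n => (hc n).le
  have hw := hasSum_En_of_abs_le hp0 hpq hr0 ha' hb' hc' hb0 hbb hcc hu.1 (add_nonneg hs ht)
    (fun n => abs_mul_add_mul_le hs ht (abs_pos_apply_le u n) (abs_neg_apply_le u n))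
    (fun n => by
      rw [dlt_mul_pos_add_mul_neg]
      exact abs_mul_add_mul_le hs ht (abs_dlt_pos_le u n) (abs_dlt_neg_le u n))
  have hu' := hasSum_En_of_abs_le hp0 hpq hr0 ha' hb' hc' hb0 hbb hcc hu.1 zero_le_one
    (v := u) (by simp) (by simp)
  have hq : q ≠ 0 := by linarith
  have hpos := hasSum_pr_of_abs_le hp2 hq ha' hb' hc' hu (abs_pos_apply_le u) (abs_dlt_pos_le u)
  have hneg := hasSum_pr_of_abs_le hp2 hq ha' hb' hc' hu (abs_neg_apply_le u) (abs_dlt_neg_le u)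
  have hnpos := hasSum_nsum hp0 ha' hb' (memE_of_abs_le (K := 1) ha' hb'
    (by simpa using abs_pos_apply_le u) (by simpa using abs_dlt_pos_le u) hu.1)
  have hnneg := hasSum_nsum hp0 ha' hb' (memE_of_abs_le (K := 1) ha' hb'
    (by simpa using abs_neg_apply_le u) (by simpa using abs_dlt_neg_le u) hu.1)
  have hmix := summable_mul_mixedSum hpe hs ht ha' hb' hu.1 (abs_dlt_pos_le u) (abs_dlt_neg_le u)
  exact hasSum_le (fun n => density_le hpe hp2 hpq hr0 hs ht (ha' n) (hc' n) u)
    (((((hw.add (hpos.mul_left _)).add (hneg.mul_left _)).add (hnpos.mul_left _)).add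
      (hnneg.mul_left _)).add hmix.hasSum) hu'

theorem stmt5 (p : ℕ) (hp2 : 2 ≤ p) (hpe : Even p)
    (q r : ℝ) (hpq : (p : ℝ) < q) (hr : 1 ≤ r)
    (a b c : ℤ → ℝ)
    (ha : ∀ n, 0 < a n) (hb : ∀ n, 0 < b n) (hc : ∀ n, 0 < c n)
    (b0 : ℝ) (hb0 : 0 < b0) (hbb : ∀ n, b0 ≤ b n)
    (hbinf : Tendsto b cofinite atTop)
    (c0 : ℝ) (hc0 : 0 < c0) (hcc : ∀ n, c n ≤ c0)
    (hcsum : Summable c)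
    (u : ℤ → ℝ) (hu : memD a b c p q r u)
    (s t : ℝ) (hs : 0 ≤ s) (ht : 0 ≤ t) :
    (∀ i ∈ Finset.Icc 1 (p / 2 - 1), ∀ j ∈ Finset.Icc 1 (i - 1),
      0 ≤ Theta p s t i j) ∧
    En a b c p q r (fun n => s * pos u n + t * neg u n)
        + ((1 - s ^ q) / q) * pr a b c p q r u (pos u)
        + ((1 - t ^ q) / q) * pr a b c p q r u (neg u)
        + ((1 - s ^ p) / (p : ℝ) - (1 - s ^ q) / q) * dnorm a b p (pos u) ^ p
        + ((1 - t ^ p) / (p : ℝ) - (1 - t ^ q) / q) * dnorm a b p (neg u) ^ p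
        + (∑' n : ℤ, a n *
            ∑ i ∈ Finset.Icc 1 (p / 2 - 1), ∑ j ∈ Finset.Icc 1 (i - 1),
              (2 : ℝ) ^ (i - j) * |dlt (pos u) n| ^ (p - (i + j))
                * |dlt (neg u) n| ^ (i + j) * Theta p s t i j)
      ≤ En a b c p q r u :=
  stmt5_general p hp2 hpe q r hpq hr a b c ha hb hc b0 hb0 hbb c0 hcc u hu s t hs ht

end DPLap
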